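/- arXiv:2507.10114 — 2 statements merged into one kernel-verified Lean document; each statement's English description precedes it below -/
import Mathlib

section
/- Let G be a connected simple graph with vertex set {v₁, ..., vₙ} and define c(vᵢ) = 2^{i-1} for each i ∈ {1, ..., n}. Then for every simple graph G' on n vertices and every vertex assignment c' : V(G') → ℤ⁺, if S(G,c) = S(G',c') then G is isomorphic to G'. -/
/-!
Each power `2 ^ i` is the weight of a single vertex of `G`, so it is realised by a connected
vertex set `sᵢ` of `G'`. The sets `sⱼ` with `j < i` weigh at most `2 ^ i - 1` altogether, so `sᵢ`
contains a vertex `f i` lying in none of them; `f` is then injective, hence a bijection onto `V'`,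
with `c' (f i) ≤ 2 ^ i`. Since `G` is connected, `2 ^ n - 1` is a connected subgraph sum, which
forces `c' (f i) = 2 ^ i`. Both weightings now have injective subset sums, so `a, b` are adjacent
exactly when `c a + c b` is a connected subgraph sum, and `f` is an isomorphism.
-/

/-- The set of connected subgraph sums of `G` with vertex assignment `c`. -/
def connSums {V : Type*} [Fintype V] (G : SimpleGraph V) (c : V → ℕ) : Set ℕ :=
  {N | ∃ s : Finset V, s.Nonempty ∧ (G.induce (↑s : Set V)).Connected ∧ ∑ v ∈ s, c v = N}

open Finset Function

namespace SimpleGraph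

variable {V : Type*} (G : SimpleGraph V)

lemma connected_induce_pair_iff {a b : V} (hab : a ≠ b) :
    (G.induce {a, b}).Connected ↔ G.Adj a b := by
  refine ⟨fun h => ?_, induce_pair_connected_of_adj⟩
  obtain ⟨p⟩ := h.preconnected ⟨a, by simp⟩ ⟨b, by simp⟩
  have hadj : G.Adj a p.snd := p.adj_snd (Walk.not_nil_of_ne (by simpa using hab))
  rcases p.snd.2 with h | h
  · exact absurd (h ▸ hadj) (G.irrefl)
  · rwa [Set.mem_singleton_iff.1 h] at hadj

end SimpleGraph

lemma Finset.sum_biUnion_le {ι α M : Type*} [DecidableEq α] [AddCommMonoid M] [PartialOrder M]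
    [CanonicallyOrderedAdd M] (I : Finset ι) (s : ι → Finset α) (f : α → M) :
    ∑ x ∈ I.biUnion s, f x ≤ ∑ i ∈ I, ∑ x ∈ s i, f x := by
  classical
  induction I using Finset.induction with
  | empty => simp
  | insert j I hj ih =>
    rw [biUnion_insert, sum_insert hj]
    calc ∑ x ∈ s j ∪ I.biUnion s, f x
        ≤ ∑ x ∈ s j ∪ I.biUnion s, f x + ∑ x ∈ s j ∩ I.biUnion s, f x := le_self_add
      _ = ∑ x ∈ s j, f x + ∑ x ∈ I.biUnion s, f x := sum_union_inter
      _ ≤ _ := by gcongr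

lemma Fin.sum_two_pow_lt {n : ℕ} {s : Finset (Fin n)} {i : Fin n} (hs : ∀ j ∈ s, j < i) :
    ∑ j ∈ s, 2 ^ (j : ℕ) < 2 ^ (i : ℕ) := by
  simpa using Nat.geomSum_lt (s := s.map Fin.valEmbedding) le_rfl (by simpa using hs)

lemma Fin.sum_two_pow_injective (n : ℕ) :
    Injective fun s : Finset (Fin n) => ∑ i ∈ s, 2 ^ (i : ℕ) := by
  intro s t h
  refine map_injective Fin.valEmbedding (geomSum_injective le_rfl ?_)
  simpa [sum_map] using h

lemma exists_injective_mem_of_sum_eq_two_pow {V : Type*} {n : ℕ} (c : V → ℕ)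
    (s : Fin n → Finset V) (hs : ∀ i, ∑ v ∈ s i, c v = 2 ^ (i : ℕ)) :
    ∃ f : Fin n → V, Injective f ∧ ∀ i, f i ∈ s i := by
  classical
  have hnew : ∀ i, ∃ v ∈ s i, ∀ j < i, v ∉ s j := by
    intro i
    by_contra! h
    have hsub : s i ⊆ (Iio i).biUnion s := fun v hv => by simpa using h v hv
    have := calc 2 ^ (i : ℕ) = ∑ v ∈ s i, c v := (hs i).symm
      _ ≤ ∑ v ∈ (Iio i).biUnion s, c v := sum_le_sum_of_subset hsub
      _ ≤ ∑ j ∈ Iio i, ∑ v ∈ s j, c v := sum_biUnion_le _ _ _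
      _ = ∑ j ∈ Iio i, 2 ^ (j : ℕ) := sum_congr rfl fun j _ => hs j
      _ < 2 ^ (i : ℕ) := Fin.sum_two_pow_lt fun j => mem_Iio.1
    exact lt_irrefl _ this
  choose f hfs hfnew using hnew
  refine ⟨f, fun i j hij => ?_, hfs⟩
  by_contra hne
  rcases lt_or_gt_of_ne hne with h | h
  · exact hfnew j i h (hij ▸ hfs i)
  · exact hfnew i j h (hij ▸ hfs j)

lemma exists_equiv_apply_eq_two_pow {V : Type*} [Fintype V] {n : ℕ} (c : V → ℕ)
    (hcard : Fintype.card V = n)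
    (hpow : ∀ i : Fin n, ∃ s : Finset V, ∑ v ∈ s, c v = 2 ^ (i : ℕ))
    (htot : ∑ i : Fin n, 2 ^ (i : ℕ) ≤ ∑ v, c v) :
    ∃ e : Fin n ≃ V, ∀ i, c (e i) = 2 ^ (i : ℕ) := by
  choose s hs using hpow
  obtain ⟨f, hf, hfs⟩ := exists_injective_mem_of_sum_eq_two_pow c s hs
  let e := Equiv.ofBijective f
    ((Fintype.bijective_iff_injective_and_card f).2 ⟨hf, by simp [hcard]⟩)
  have hle : ∀ i ∈ univ, c (e i) ≤ 2 ^ (i : ℕ) := fun i _ =>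
    hs i ▸ single_le_sum (fun _ _ => Nat.zero_le _) (hfs i)
  have hsum : ∑ i, c (e i) = ∑ i : Fin n, 2 ^ (i : ℕ) :=
    le_antisymm (sum_le_sum hle) (htot.trans_eq (e.sum_comp c).symm)
  exact ⟨e, fun i => (sum_eq_sum_iff_of_le hle).1 hsum i (mem_univ i)⟩

section connSums

variable {V : Type*} [Fintype V] {G : SimpleGraph V} {c : V → ℕ}

variable (G c) in
lemma apply_mem_connSums (v : V) : c v ∈ connSums G c :=
  ⟨{v}, singleton_nonempty v, by
    rw [coe_singleton, G.induce_singleton_eq_top]; exact SimpleGraph.connected_top,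
    sum_singleton _ _⟩

variable (c) in
lemma SimpleGraph.Connected.sum_mem_connSums (hG : G.Connected) :
    ∑ v, c v ∈ connSums G c :=
  ⟨univ, univ_nonempty_iff.2 hG.nonempty,
    by rw [coe_univ]; exact G.induceUnivIso.connected_iff.2 hG, rfl⟩

lemma adj_iff_add_mem_connSums (hc : Injective fun s : Finset V => ∑ v ∈ s, c v) {a b : V} :
    G.Adj a b ↔ a ≠ b ∧ c a + c b ∈ connSums G c := by
  classical
  refine ⟨fun h => ⟨h.ne, {a, b}, insert_nonempty _ _, ?_, sum_pair h.ne⟩, ?_⟩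
  · rw [coe_pair]; exact (G.connected_induce_pair_iff h.ne).2 h
  rintro ⟨hab, s, -, hs, hsum⟩
  obtain rfl : s = {a, b} := hc (hsum.trans (sum_pair hab).symm)
  rwa [coe_pair, G.connected_induce_pair_iff hab] at hs

end connSums

/-- If `G` is connected on vertices `v₁, …, vₙ` and `c(vᵢ) = 2^(i-1)`, then the
collection of connected subgraph sums determines `G` among all `n`-vertex graphs. -/
theorem stmt_3 (n : ℕ) (G : SimpleGraph (Fin n)) (hG : G.Connected)
    (c : Fin n → ℕ) (hc : ∀ i : Fin n, c i = 2 ^ (i : ℕ)) :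
    ∀ (V' : Type) (_ : Fintype V') (G' : SimpleGraph V') (c' : V' → ℕ),
      Fintype.card V' = n → (∀ v, 0 < c' v) →
      connSums G c = connSums G' c' → Nonempty (G ≃g G') := by
  intro V' _ G' c' hcard _ hS
  obtain rfl : c = fun i : Fin n => 2 ^ (i : ℕ) := funext hc
  have hpow : ∀ i : Fin n, ∃ s : Finset V', ∑ v ∈ s, c' v = 2 ^ (i : ℕ) := fun i => by
    obtain ⟨s, -, -, hs⟩ := hS ▸ apply_mem_connSums G _ i
    exact ⟨s, hs⟩
  have htot : ∑ i : Fin n, 2 ^ (i : ℕ) ≤ ∑ v, c' v := by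
    obtain ⟨s, -, -, hs⟩ := hS ▸ hG.sum_mem_connSums _
    exact hs ▸ sum_le_sum_of_subset (subset_univ s)
  obtain ⟨e, he⟩ := exists_equiv_apply_eq_two_pow c' hcard hpow htot
  have hinj : Injective fun s : Finset V' => ∑ v ∈ s, c' v := fun s t hst =>
    map_injective e.symm.toEmbedding <| Fin.sum_two_pow_injective n <| by
      simpa [sum_map, ← he] using hst
  refine ⟨⟨e, fun {a b} => ?_⟩⟩
  rw [adj_iff_add_mem_connSums hinj, adj_iff_add_mem_connSums (Fin.sum_two_pow_injective n), hS,
    he, he, e.injective.ne_iff]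
end

section
/- For every n ≥ 3, m(Cₙ) ≤ 2·m(P_{n−1}), where Cₙ is the cycle on n vertices and P_{n−1} is the path on n−1 vertices. -/
/-- `c` is a subgraph sum-distinct (SSD) assignment of `G`: all values are positive and
distinct nonempty vertex subsets inducing connected subgraphs have distinct sums. -/
def IsSSD {V : Type*} [Fintype V] (G : SimpleGraph V) (c : V → ℕ) : Prop :=
  (∀ v, 0 < c v) ∧ ∀ s t : Finset V, s.Nonempty → t.Nonempty →
    (G.induce (↑s : Set V)).Connected → (G.induce (↑t : Set V)).Connected →
    s ≠ t → ∑ v ∈ s, c v ≠ ∑ v ∈ t, c v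

/-- `m(G)`: the minimum over all SSD assignments `c` of `G` of the maximum weight. -/
noncomputable def mval {V : Type*} [Fintype V] (G : SimpleGraph V) : ℕ :=
  sInf {N | ∃ c : V → ℕ, IsSSD G c ∧ Finset.univ.sup c = N}

/-- `M(G)`: the minimum total weight of an SSD assignment of `G`. -/
noncomputable def Mval {V : Type*} [Fintype V] (G : SimpleGraph V) : ℕ :=
  sInf {N | ∃ c : V → ℕ, IsSSD G c ∧ ∑ v, c v = N}

/-!
Given an SSD assignment `c` of the path on `Fin k`, weight the cycle on `Fin (k + 1)` by `2 * c`
on the vertices `castSucc i` and by `1` on the last vertex. The parity of a sum then tells whether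
the set contains the last vertex. Removing two vertices cuts the cycle into two arcs and a connected
set lies in one of them; hence a connected set avoiding the last vertex is an interval of the path,
and a proper connected set containing it is the complement of such an interval. In both cases equal
sums reduce to equal sums of `c` over intervals of the path.
-/

open Finset SimpleGraph

theorem isSSD_two_pow {V : Type*} [Fintype V] (G : SimpleGraph V) (e : V ↪ ℕ) :
    IsSSD G (fun v => 2 ^ e v) := by
  refine ⟨fun _ => by positivity, fun s t _ _ _ _ hst hsum => hst ?_⟩
  rw [← Finset.sum_map s e (fun i => 2 ^ i), ← Finset.sum_map t e (fun i => 2 ^ i)] at hsum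
  exact Finset.map_injective e (Finset.geomSum_injective le_rfl hsum)

theorem IsSSD.eq_of_sum_eq {V : Type*} [Fintype V] {G : SimpleGraph V} {c : V → ℕ}
    (hc : IsSSD G c) {s t : Finset V} (hs : s.Nonempty → (G.induce (s : Set V)).Connected)
    (ht : t.Nonempty → (G.induce (t : Set V)).Connected)
    (hsum : ∑ v ∈ s, c v = ∑ v ∈ t, c v) : s = t := by
  have sum_pos {u : Finset V} (hu : u.Nonempty) : 0 < ∑ v ∈ u, c v :=
    Finset.sum_pos (fun v _ => hc.1 v) hu
  rcases s.eq_empty_or_nonempty with rfl | hs'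
  · rcases t.eq_empty_or_nonempty with rfl | ht'
    · rfl
    · exact absurd hsum (by simpa using (sum_pos ht').ne)
  · rcases t.eq_empty_or_nonempty with rfl | ht'
    · exact absurd hsum (by simpa using (sum_pos hs').ne')
    · by_contra hst
      exact hc.2 s t hs' ht' (hs hs') (ht ht') hst hsum

theorem exists_isSSD_sup_eq_mval {V : Type*} [Fintype V] (G : SimpleGraph V) :
    ∃ c : V → ℕ, IsSSD G c ∧ univ.sup c = mval G :=
  Nat.sInf_mem (s := {N | ∃ c : V → ℕ, IsSSD G c ∧ univ.sup c = N})
    ⟨_, _, isSSD_two_pow G ((Fintype.equivFin V).toEmbedding.trans Fin.valEmbedding), rfl⟩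

theorem mval_le_of_isSSD {V : Type*} [Fintype V] {G : SimpleGraph V} {c : V → ℕ}
    (hc : IsSSD G c) : mval G ≤ univ.sup c :=
  Nat.sInf_le ⟨c, hc, rfl⟩

namespace SimpleGraph

theorem induce_hasse_of_ordConnected {α : Type*} [PartialOrder α] (s : Set α)
    [hs : s.OrdConnected] : (hasse α).induce s = hasse s := by
  ext x y
  have hrange : (Set.range (OrderEmbedding.subtype (· ∈ s))).OrdConnected := by
    simpa using hs
  simp only [comap_adj, Function.Embedding.coe_subtype, hasse_adj]
  rw [← hrange.apply_covBy_apply_iff, ← hrange.apply_covBy_apply_iff]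
  rfl

theorem pathGraph_induce_connected_of_ordConnected {k : ℕ} {s : Set (Fin k)} (hne : s.Nonempty)
    (hs : s.OrdConnected) : ((pathGraph k).induce s).Connected := by
  have : Nonempty s := hne.to_subtype
  rw [pathGraph, induce_hasse_of_ordConnected]
  exact ⟨hasse_preconnected_of_succ s⟩

theorem cycleGraph_adj_mem_Ioo {n : ℕ} {a b u v : Fin n} (huv : (cycleGraph n).Adj u v)
    (hu : u ∈ Set.Ioo a b) (hva : v ≠ a) (hvb : v ≠ b) : v ∈ Set.Ioo a b := by
  have hb := b.isLt
  rcases lt_or_gt_of_ne huv.ne with h | h <;>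
  · rw [cycleGraph_adj', Fin.sub_val_of_le h.le, Fin.coe_sub_iff_lt.2 h] at huv
    simp only [Set.mem_Ioo, Fin.lt_def, ne_eq, Fin.ext_iff] at hu hva hvb h ⊢
    omega

theorem mem_Ioo_of_cycleGraph_induce_preconnected {n : ℕ} {s : Set (Fin n)}
    (hs : ((cycleGraph n).induce s).Preconnected) {a b x y : Fin n} (ha : a ∉ s) (hb : b ∉ s)
    (hx : x ∈ s) (hy : y ∈ s) (hxab : x ∈ Set.Ioo a b) : y ∈ Set.Ioo a b := by
  by_contra hyab
  obtain ⟨w⟩ := hs ⟨x, hx⟩ ⟨y, hy⟩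
  obtain ⟨d, -, hd₁, hd₂⟩ := w.exists_boundary_dart {v | v.1 ∈ Set.Ioo a b} hxab hyab
  exact hd₂ (cycleGraph_adj_mem_Ioo d.adj hd₁ (ne_of_mem_of_not_mem d.snd.2 ha)
    (ne_of_mem_of_not_mem d.snd.2 hb))

theorem ordConnected_preimage_castSucc_of_last_notMem {k : ℕ} {s : Set (Fin (k + 1))}
    (hs : ((cycleGraph (k + 1)).induce s).Preconnected) (hlast : Fin.last k ∉ s) :
    (Fin.castSucc ⁻¹' s).OrdConnected := by
  refine Set.ordConnected_of_Ioo fun x hx y hy _ z hz => ?_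
  by_contra hzs
  have hxz := mem_Ioo_of_cycleGraph_induce_preconnected hs hzs hlast hy hx
    ⟨Fin.castSucc_lt_castSucc_iff.2 hz.2, Fin.castSucc_lt_last y⟩
  exact lt_asymm hz.1 (Fin.castSucc_lt_castSucc_iff.1 hxz.1)

theorem ordConnected_compl_preimage_castSucc_of_last_mem {k : ℕ} {s : Set (Fin (k + 1))}
    (hs : ((cycleGraph (k + 1)).induce s).Preconnected) (hlast : Fin.last k ∈ s) :
    (Fin.castSucc ⁻¹' s)ᶜ.OrdConnected := by
  refine Set.ordConnected_of_Ioo fun x hx y hy _ z hz => ?_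
  by_contra hzs
  have hlast_lt := mem_Ioo_of_cycleGraph_induce_preconnected hs hx hy (not_not.1 hzs) hlast
    ⟨Fin.castSucc_lt_castSucc_iff.2 hz.1, Fin.castSucc_lt_castSucc_iff.2 hz.2⟩
  exact (Fin.castSucc_lt_last y).not_gt hlast_lt.2

end SimpleGraph

theorem eq_of_preimage_castSucc_eq {k : ℕ} {s t : Finset (Fin (k + 1))}
    (h : s.preimage Fin.castSucc (Fin.castSucc_injective k).injOn =
      t.preimage Fin.castSucc (Fin.castSucc_injective k).injOn)
    (hlast : Fin.last k ∈ s ↔ Fin.last k ∈ t) : s = t := by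
  ext v
  induction v using Fin.lastCases with
  | last => exact hlast
  | cast i => simpa using congrArg (i ∈ ·) h

def cycleAssignment {k : ℕ} (c : Fin k → ℕ) : Fin (k + 1) → ℕ :=
  Fin.snoc (α := fun _ => ℕ) (fun i => 2 * c i) 1

@[simp] theorem cycleAssignment_castSucc {k : ℕ} (c : Fin k → ℕ) (i : Fin k) :
    cycleAssignment c i.castSucc = 2 * c i := by
  simp [cycleAssignment]

@[simp] theorem cycleAssignment_last {k : ℕ} (c : Fin k → ℕ) :
    cycleAssignment c (Fin.last k) = 1 := by
  simp [cycleAssignment]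

theorem sum_cycleAssignment {k : ℕ} (c : Fin k → ℕ) (s : Finset (Fin (k + 1))) :
    ∑ v ∈ s, cycleAssignment c v =
      2 * ∑ i ∈ s.preimage Fin.castSucc (Fin.castSucc_injective k).injOn, c i +
        if Fin.last k ∈ s then 1 else 0 := by
  rw [← Finset.sum_filter_add_sum_filter_not s (· = Fin.last k)]
  have hcast : s.filter (· ≠ Fin.last k) =
      (s.preimage Fin.castSucc (Fin.castSucc_injective k).injOn).map Fin.castSuccEmb := by
    ext v
    induction v using Fin.lastCases <;> simp
  rw [Finset.filter_eq', hcast, Finset.sum_map, Finset.mul_sum, add_comm]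
  split_ifs <;> simp

theorem isSSD_cycleAssignment {k : ℕ} {c : Fin k → ℕ} (hc : IsSSD (pathGraph k) c) :
    IsSSD (cycleGraph (k + 1)) (cycleAssignment c) := by
  refine ⟨Fin.lastCases (by simp) fun i => by simpa using hc.1 i, ?_⟩
  intro s t _ _ hs ht hst hsum
  apply hst
  rw [sum_cycleAssignment, sum_cycleAssignment] at hsum
  set s₀ := s.preimage Fin.castSucc (Fin.castSucc_injective k).injOn with hs₀
  set t₀ := t.preimage Fin.castSucc (Fin.castSucc_injective k).injOn with ht₀
  have hlast : Fin.last k ∈ s ↔ Fin.last k ∈ t := by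
    split_ifs at hsum <;> grind
  have hsum₀ : ∑ i ∈ s₀, c i = ∑ i ∈ t₀, c i := by
    split_ifs at hsum <;> omega
  have connected_of {u : Finset (Fin k)} (hu : (u : Set (Fin k)).OrdConnected) (hne : u.Nonempty) :
      ((pathGraph k).induce (u : Set (Fin k))).Connected :=
    pathGraph_induce_connected_of_ordConnected (coe_nonempty.2 hne) hu
  suffices s₀ = t₀ from eq_of_preimage_castSucc_eq this hlast
  by_cases hls : Fin.last k ∈ s
  · have hlt := hlast.1 hls
    have hsum_compl : ∑ i ∈ s₀ᶜ, c i = ∑ i ∈ t₀ᶜ, c i := by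
      have := Finset.sum_compl_add_sum s₀ c
      have := Finset.sum_compl_add_sum t₀ c
      omega
    rw [← compl_inj_iff]
    refine hc.eq_of_sum_eq (connected_of ?_) (connected_of ?_) hsum_compl
    · simpa [hs₀] using ordConnected_compl_preimage_castSucc_of_last_mem hs.preconnected hls
    · simpa [ht₀] using ordConnected_compl_preimage_castSucc_of_last_mem ht.preconnected hlt
  · have hlt : Fin.last k ∉ t := hlast.not.1 hls
    refine hc.eq_of_sum_eq (connected_of ?_) (connected_of ?_) hsum₀
    · simpa [hs₀] using ordConnected_preimage_castSucc_of_last_notMem hs.preconnected hls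
    · simpa [ht₀] using ordConnected_preimage_castSucc_of_last_notMem ht.preconnected hlt

theorem sup_cycleAssignment_le {k : ℕ} [NeZero k] {c : Fin k → ℕ} (hc : ∀ i, 0 < c i) :
    univ.sup (cycleAssignment c) ≤ 2 * univ.sup c := by
  refine Finset.sup_le fun v _ => ?_
  induction v using Fin.lastCases with
  | last =>
    have := le_sup (f := c) (mem_univ 0)
    have := hc 0
    simp only [cycleAssignment_last]
    omega
  | cast i => simpa using le_sup (f := c) (mem_univ i)

/-- `m(Cₙ) ≤ 2 ⬝ m(P_{n-1})` for `n ≥ 3`. -/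
theorem stmt_11 (n : ℕ) (hn : 3 ≤ n) :
    mval (SimpleGraph.cycleGraph n) ≤ 2 * mval (SimpleGraph.pathGraph (n - 1)) := by
  obtain ⟨k, rfl⟩ : ∃ k, n = k + 1 := ⟨n - 1, by omega⟩
  have : NeZero k := ⟨by omega⟩
  obtain ⟨c, hc, hsup⟩ := exists_isSSD_sup_eq_mval (pathGraph k)
  calc mval (cycleGraph (k + 1))
      ≤ univ.sup (cycleAssignment c) := mval_le_of_isSSD (isSSD_cycleAssignment hc)
    _ ≤ 2 * univ.sup c := sup_cycleAssignment_le hc.1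
    _ = 2 * mval (pathGraph (k + 1 - 1)) := by rw [hsup, Nat.add_sub_cancel]
end
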